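/- arXiv:2510.21077 — 3 statements merged into one kernel-verified Lean document; each statement's English description precedes it below -/
import Mathlib

section
/- Rank-one perturbation trace inequality: for z ∈ ℂ⁺ with ν = Im(z), an n×n complex matrix A, an n×n Hermitian matrix B, τ ∈ ℝ, and q ∈ ℂ^n, we have |tr(((B − zI)^{−1} − (B + τqq* − zI)^{−1})A)| ≤ ‖A‖/ν. -/
/-!
Write `R = (B - z)⁻¹`, `R' = (B + τqq* - z)⁻¹`, `a = ⟨q, Rq⟩` and `b = ⟨q, R'q⟩`. The resolvent
identity gives `R - R' = τ (Rq)(R'*q)*`, so the trace is `τ ⟨R'*q, A Rq⟩`, of modulus at most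
`|τ| ‖A‖ ‖Rq‖ ‖R'*q‖`; it also gives `a - b = τab`. The Ward identities `Im a = ν ‖Rq‖²` and
`Im b = ν ‖R'*q‖²` reduce the claim to the scalar inequality `τ² Im a Im b ≤ 1`, which holds for
any `a, b` with `a - b = τab` because `a (1 - τb) = b` forces `Im a · |1 - τb|² = Im b`.
-/

open Matrix WithLp

namespace Matrix

theorem isHermitian_vecMulVec_star {ι α : Type*} [CommSemiring α] [StarRing α] (q : ι → α) :
    (vecMulVec q (star q)).IsHermitian := by
  rw [IsHermitian, conjTranspose_vecMulVec, star_star]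

variable {ι : Type*} [Fintype ι]

theorem star_dotProduct_conjTranspose_mulVec {α : Type*} [NonUnitalSemiring α] [StarRing α]
    (M : Matrix ι ι α) (q : ι → α) :
    star q ⬝ᵥ (Mᴴ *ᵥ q) = star (star q ⬝ᵥ (M *ᵥ q)) := by
  rw [star_dotProduct, star_mulVec, conjTranspose_conjTranspose, ← dotProduct_mulVec]

theorem star_dotProduct_self_eq_norm_sq {𝕜 : Type*} [RCLike 𝕜] (v : ι → 𝕜) :
    star v ⬝ᵥ v = (‖toLp 2 v‖ : 𝕜) ^ 2 := by
  rw [← inner_self_eq_norm_sq_to_K, EuclideanSpace.inner_toLp_toLp, dotProduct_comm]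

variable [DecidableEq ι]

theorem norm_star_dotProduct_mulVec_le {𝕜 : Type*} [RCLike 𝕜] (A : Matrix ι ι 𝕜)
    (u v : ι → 𝕜) :
    ‖star u ⬝ᵥ (A *ᵥ v)‖ ≤ ‖toEuclideanCLM (𝕜 := 𝕜) A‖ * ‖toLp 2 u‖ * ‖toLp 2 v‖ := by
  have h : star u ⬝ᵥ (A *ᵥ v) = inner 𝕜 (toLp 2 u) (toEuclideanCLM (𝕜 := 𝕜) A (toLp 2 v)) := by
    rw [toEuclideanCLM_toLp, EuclideanSpace.inner_toLp_toLp, dotProduct_comm]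
  calc ‖star u ⬝ᵥ (A *ᵥ v)‖ ≤ ‖toLp 2 u‖ * ‖toEuclideanCLM (𝕜 := 𝕜) A (toLp 2 v)‖ :=
        h ▸ norm_inner_le_norm _ _
    _ ≤ ‖toLp 2 u‖ * (‖toEuclideanCLM (𝕜 := 𝕜) A‖ * ‖toLp 2 v‖) := by
        gcongr; exact ContinuousLinearMap.le_opNorm _ _
    _ = ‖toEuclideanCLM (𝕜 := 𝕜) A‖ * ‖toLp 2 u‖ * ‖toLp 2 v‖ := by ring

theorem inv_sub_inv_add_smul_vecMulVec {α : Type*} [CommRing α] {M : Matrix ι ι α} {c : α}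
    {u v : ι → α} (hM : IsUnit M) (hM' : IsUnit (M + c • vecMulVec u v)) :
    M⁻¹ - (M + c • vecMulVec u v)⁻¹ =
      c • vecMulVec (M⁻¹ *ᵥ u) (v ᵥ* (M + c • vecMulVec u v)⁻¹) := by
  rw [inv_sub_inv (iff_of_true hM hM'), add_sub_cancel_left, Matrix.mul_smul, Matrix.smul_mul,
    mul_vecMulVec, vecMulVec_mul]

namespace IsHermitian

variable {M : Matrix ι ι ℂ}

theorem isUnit_sub_smul_one (hM : M.IsHermitian) {z : ℂ} (hz : z.im ≠ 0) :
    IsUnit (M - z • 1) := by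
  have hz : z ∉ spectrum ℂ M := by
    rw [hM.spectrum_eq_image_range]
    rintro ⟨x, -, rfl⟩
    exact hz (Complex.ofReal_im x)
  rw [← neg_sub, IsUnit.neg_iff, ← Algebra.algebraMap_eq_smul_one]
  exact spectrum.notMem_iff.mp hz

theorem conjTranspose_inv_sub_smul_one (hM : M.IsHermitian) (z : ℂ) :
    (M - z • 1)⁻¹ᴴ = (M - star z • 1)⁻¹ := by
  rw [conjTranspose_nonsing_inv, conjTranspose_sub, hM.eq, conjTranspose_smul, conjTranspose_one]

theorem inv_sub_smul_one_sub_conjTranspose (hM : M.IsHermitian) {z : ℂ} (hz : z.im ≠ 0) :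
    (M - z • 1)⁻¹ - (M - z • 1)⁻¹ᴴ = (z - star z) • ((M - z • 1)⁻¹ * (M - z • 1)⁻¹ᴴ) := by
  have hz' : (star z).im ≠ 0 := by simpa using hz
  rw [hM.conjTranspose_inv_sub_smul_one, inv_sub_inv (iff_of_true (hM.isUnit_sub_smul_one hz)
    (hM.isUnit_sub_smul_one hz')), sub_sub_sub_cancel_left, ← sub_smul, Matrix.mul_smul,
    Matrix.smul_mul, Matrix.mul_one]

theorem im_star_dotProduct_inv_sub_smul_one_mulVec (hM : M.IsHermitian) {z : ℂ}
    (hz : z.im ≠ 0) (q : ι → ℂ) :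
    (star q ⬝ᵥ ((M - z • 1)⁻¹ *ᵥ q)).im = z.im * ‖toLp 2 ((M - z • 1)⁻¹ᴴ *ᵥ q)‖ ^ 2 := by
  have hdiff := hM.inv_sub_smul_one_sub_conjTranspose hz
  set R := (M - z • 1)⁻¹
  have hnorm : star q ⬝ᵥ ((R * Rᴴ) *ᵥ q) = ((‖toLp 2 (Rᴴ *ᵥ q)‖ ^ 2 : ℝ) : ℂ) := by
    rw [← mulVec_mulVec, dotProduct_mulVec, ← conjTranspose_conjTranspose R, ← star_mulVec,
      conjTranspose_conjTranspose, star_dotProduct_self_eq_norm_sq, Complex.ofReal_pow]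
    rfl
  have h := congrArg (fun N ↦ star q ⬝ᵥ (N *ᵥ q)) hdiff
  simp only [sub_mulVec, dotProduct_sub, star_dotProduct_conjTranspose_mulVec, smul_mulVec,
    dotProduct_smul, hnorm, smul_eq_mul] at h
  have him := congrArg Complex.im h
  simp only [Complex.sub_im, Complex.star_def, Complex.conj_im, Complex.mul_im,
    Complex.ofReal_re, Complex.ofReal_im] at him
  linarith

theorem im_star_dotProduct_inv_sub_smul_one_mulVec' (hM : M.IsHermitian) {z : ℂ}
    (hz : z.im ≠ 0) (q : ι → ℂ) :
    (star q ⬝ᵥ ((M - z • 1)⁻¹ *ᵥ q)).im = z.im * ‖toLp 2 ((M - z • 1)⁻¹ *ᵥ q)‖ ^ 2 := by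
  have h := hM.im_star_dotProduct_inv_sub_smul_one_mulVec (z := star z) (by simpa using hz) q
  rw [← hM.conjTranspose_inv_sub_smul_one, conjTranspose_conjTranspose,
    star_dotProduct_conjTranspose_mulVec] at h
  simpa using h

end IsHermitian

end Matrix

namespace Complex

theorem sq_mul_im_mul_im_le_one_of_sub_eq {τ : ℝ} {a b : ℂ} (h : a - b = τ * a * b) :
    τ ^ 2 * a.im * b.im ≤ 1 := by
  set c := 1 - τ * b
  -- `a * c = b`, and `Im (b * conj c) = Im b` because `τ` is real
  have hc : a.im * normSq c = b.im := by
    have hre := congrArg re h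
    have him := congrArg im h
    simp only [sub_re, sub_im, mul_re, mul_im, ofReal_re, ofReal_im] at hre him
    simp only [c, normSq_apply, sub_re, sub_im, mul_re, mul_im, ofReal_re, ofReal_im, one_re,
      one_im]
    linear_combination (1 - τ * b.re) * him + τ * b.im * hre
  have hcim : (τ * b.im) ^ 2 ≤ normSq c := by
    have : c.im = -(τ * b.im) := by simp [c]
    rw [normSq_apply, this]
    nlinarith [mul_self_nonneg c.re]
  rcases (normSq_nonneg c).eq_or_lt with hc0 | hcpos
  · simp [← hc, ← hc0]
  · refine le_of_mul_le_mul_right ?_ hcpos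
    linear_combination hcim + τ ^ 2 * b.im * hc

theorem abs_mul_mul_le_one_div_of_sub_eq {τ ν x y : ℝ} {a b : ℂ}
    (h : a - b = τ * a * b) (hν : 0 < ν) (hx : 0 ≤ x) (hy : 0 ≤ y)
    (ha : a.im = ν * x ^ 2) (hb : b.im = ν * y ^ 2) : |τ| * x * y ≤ 1 / ν := by
  have hsq : (|τ| * x * y * ν) ^ 2 ≤ 1 := by
    have := sq_mul_im_mul_im_le_one_of_sub_eq h
    rw [ha, hb] at this
    linear_combination (sq_abs τ) * (x * y * ν) ^ 2 + this
  rw [le_div_iff₀ hν]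
  exact (pow_le_one_iff_of_nonneg (by positivity) two_ne_zero).mp hsq

end Complex

theorem Matrix.norm_trace_sub_mul_le_of_sub_eq_smul_vecMulVec {ι : Type*} [Fintype ι]
    [DecidableEq ι] {R R' : Matrix ι ι ℂ} (A : Matrix ι ι ℂ) {τ ν : ℝ} {q : ι → ℂ}
    (hdiff : R - R' = (τ : ℂ) • vecMulVec (R *ᵥ q) (star (R'ᴴ *ᵥ q))) (hν : 0 < ν)
    (hR : (star q ⬝ᵥ (R *ᵥ q)).im = ν * ‖toLp 2 (R *ᵥ q)‖ ^ 2)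
    (hR' : (star q ⬝ᵥ (R' *ᵥ q)).im = ν * ‖toLp 2 (R'ᴴ *ᵥ q)‖ ^ 2) :
    ‖((R - R') * A).trace‖ ≤ ‖toEuclideanCLM (𝕜 := ℂ) A‖ / ν := by
  set u := R *ᵥ q
  set w := R'ᴴ *ᵥ q
  have htrace : ((R - R') * A).trace = τ * (star w ⬝ᵥ (A *ᵥ u)) := by
    rw [hdiff, Matrix.smul_mul, trace_smul, vecMulVec_mul, trace_vecMulVec, dotProduct_comm,
      ← dotProduct_mulVec, smul_eq_mul]
  have hab : star q ⬝ᵥ (R *ᵥ q) - star q ⬝ᵥ (R' *ᵥ q)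
      = τ * (star q ⬝ᵥ (R *ᵥ q)) * (star q ⬝ᵥ (R' *ᵥ q)) := by
    have hw : star w ⬝ᵥ q = star q ⬝ᵥ (R' *ᵥ q) := by
      rw [star_mulVec, conjTranspose_conjTranspose, dotProduct_mulVec]
    have h := congrArg (fun N ↦ star q ⬝ᵥ (N *ᵥ q)) hdiff
    simp only [sub_mulVec, dotProduct_sub, smul_mulVec, vecMulVec_mulVec, op_smul_eq_smul,
      dotProduct_smul, hw, smul_eq_mul] at h
    rw [h]
    ring
  have hbound := Complex.abs_mul_mul_le_one_div_of_sub_eq hab hν (norm_nonneg (toLp 2 u))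
    (norm_nonneg (toLp 2 w)) hR hR'
  calc ‖((R - R') * A).trace‖ = |τ| * ‖star w ⬝ᵥ (A *ᵥ u)‖ := by
        rw [htrace, norm_mul, Complex.norm_real, Real.norm_eq_abs]
    _ ≤ |τ| * (‖toEuclideanCLM (𝕜 := ℂ) A‖ * ‖toLp 2 w‖ * ‖toLp 2 u‖) := by
        gcongr; exact norm_star_dotProduct_mulVec_le A w u
    _ = ‖toEuclideanCLM (𝕜 := ℂ) A‖ * (|τ| * ‖toLp 2 u‖ * ‖toLp 2 w‖) := by ring
    _ ≤ ‖toEuclideanCLM (𝕜 := ℂ) A‖ / ν := by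
        rw [← mul_one_div]; gcongr

/-- Rank-one perturbation trace inequality: for `z ∈ ℂ⁺` with `ν = Im z`, an `n × n`
complex matrix `A`, a Hermitian `B`, `τ ∈ ℝ` and `q ∈ ℂⁿ`,
`|tr(((B - zI)⁻¹ - (B + τ q q* - zI)⁻¹) A)| ≤ ‖A‖ / ν`. -/
theorem rank_one_perturbation_trace (n : ℕ) (A B : Matrix (Fin n) (Fin n) ℂ)
    (hB : B.IsHermitian) (τ : ℝ) (q : Fin n → ℂ) (z : ℂ) (hz : 0 < z.im) :
    ‖(Matrix.trace
          (((B - z • 1)⁻¹ -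
              (B + (τ : ℂ) • Matrix.vecMulVec q (star q) - z • 1)⁻¹) * A))‖ ≤
      ‖(Matrix.toEuclideanCLM (𝕜 := ℂ) A :
          EuclideanSpace ℂ (Fin n) →L[ℂ] EuclideanSpace ℂ (Fin n))‖ / z.im := by
  have hν : z.im ≠ 0 := hz.ne'
  have hB' : (B + (τ : ℂ) • vecMulVec q (star q)).IsHermitian :=
    hB.add ((isHermitian_vecMulVec_star q).smul (by simp [IsSelfAdjoint]))
  refine norm_trace_sub_mul_le_of_sub_eq_smul_vecMulVec A (τ := τ) ?_ hz
    (hB.im_star_dotProduct_inv_sub_smul_one_mulVec' hν q)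
    (hB'.im_star_dotProduct_inv_sub_smul_one_mulVec hν q)
  rw [star_mulVec, conjTranspose_conjTranspose, add_sub_right_comm]
  exact inv_sub_inv_add_smul_vecMulVec (hB.isUnit_sub_smul_one hν)
    (add_sub_right_comm B _ (z • 1) ▸ hB'.isUnit_sub_smul_one hν)
end

section
/- Lévy distance bound for Hermitian matrices: if A and B are p×p Hermitian matrices, then the Lévy distance between their empirical spectral distributions satisfies L(F^A, F^B) ≤ ‖A − B‖, the operator norm of A − B. -/
/-!
Let `ε ≥ ‖A - B‖`. On the span of the eigenvectors of `A` with eigenvalue `≤ x - ε` the quadratic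
form of `B` is at most `x ‖u‖²`, while on the span of the eigenvectors of `B` with eigenvalue `> x`
it exceeds `x ‖u‖²` (for `u ≠ 0`). These spans thus meet only in `0`, so their dimensions add up to
at most `p`; this is the counting form of Weyl's inequality, `F^A(x - ε) ≤ F^B(x)`. Exchanging `A`
and `B` gives `F^B(x) ≤ F^A(x + ε)`, so every `ε > ‖A - B‖` is admissible in the Lévy distance.
-/

open Matrix

/-- Empirical spectral distribution of a Hermitian matrix:
`F^A(x) = (1/p) #{i : λ_i ≤ x}`. -/
noncomputable def esd {p : ℕ} {A : Matrix (Fin p) (Fin p) ℂ} (hA : A.IsHermitian)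
    (x : ℝ) : ℝ :=
  (p : ℝ)⁻¹ * (Finset.univ.filter (fun i => hA.eigenvalues i ≤ x)).card

/-- The Lévy distance between two distribution functions. -/
noncomputable def levyDist (F G : ℝ → ℝ) : ℝ :=
  sInf {ε : ℝ | 0 < ε ∧ ∀ x : ℝ, F (x - ε) - ε ≤ G x ∧ G x ≤ F (x + ε) + ε}

open scoped InnerProductSpace
open Finset Module

lemma ContinuousLinearMap.reApplyInnerSelf_le_opNorm_mul {𝕜 E : Type*} [RCLike 𝕜]
    [NormedAddCommGroup E] [InnerProductSpace 𝕜 E] (T : E →L[𝕜] E) (u : E) :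
    T.reApplyInnerSelf u ≤ ‖T‖ * ‖u‖ ^ 2 := by
  grw [T.reApplyInnerSelf_apply, RCLike.re_le_norm, norm_inner_le_norm, T.le_opNorm, mul_assoc,
    ← sq]

namespace OrthonormalBasis

variable {𝕜 E ι : Type*} [RCLike 𝕜] [NormedAddCommGroup E] [InnerProductSpace 𝕜 E] [Fintype ι]
  (b : OrthonormalBasis ι 𝕜 E)

lemma inner_eq_zero_of_mem_span_image {s : Set ι} {u : E}
    (hu : u ∈ Submodule.span 𝕜 (b '' s)) {i : ι} (hi : i ∉ s) : ⟪b i, u⟫_𝕜 = 0 := by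
  have hle : Submodule.span 𝕜 (b '' s) ≤ (𝕜 ∙ b i)ᗮ := by
    rw [Submodule.span_le]
    rintro _ ⟨j, hj, rfl⟩
    exact Submodule.mem_orthogonal_singleton_iff_inner_right.mpr
      (b.inner_eq_zero fun hij => hi (hij ▸ hj))
  exact Submodule.mem_orthogonal_singleton_iff_inner_right.mp (hle hu)

lemma finrank_span_image (s : Finset ι) :
    finrank 𝕜 (Submodule.span 𝕜 (b '' s)) = #s := by
  rw [Set.image_eq_range]
  exact (finrank_span_eq_card
    (b.orthonormal.linearIndependent.comp ((↑) : s → ι) Subtype.val_injective)).trans (by simp)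

variable {b} {T : E →L[𝕜] E} {μ : ι → ℝ}

lemma reApplyInnerSelf_eq_sum (hT : ∀ i, T (b i) = (μ i : 𝕜) • b i) (u : E) :
    T.reApplyInnerSelf u = ∑ i, μ i * ‖⟪b i, u⟫_𝕜‖ ^ 2 := by
  have hTu : T u = ∑ i, (⟪b i, u⟫_𝕜 * μ i) • b i := by
    conv_lhs => rw [← b.sum_repr' u]
    simp [map_sum, hT, smul_smul]
  simp only [T.reApplyInnerSelf_apply, hTu, sum_inner, inner_smul_left, map_sum]
  refine sum_congr rfl fun i _ => ?_
  rw [(starRingEnd 𝕜).map_mul, RCLike.conj_ofReal, mul_right_comm, RCLike.conj_mul]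
  norm_cast
  ring

variable {s : Set ι} {c : ℝ} {u : E}

lemma reApplyInnerSelf_le_of_mem_span_image (hT : ∀ i, T (b i) = (μ i : 𝕜) • b i)
    (hμ : ∀ i ∈ s, μ i ≤ c) (hu : u ∈ Submodule.span 𝕜 (b '' s)) :
    T.reApplyInnerSelf u ≤ c * ‖u‖ ^ 2 := by
  rw [reApplyInnerSelf_eq_sum hT, ← b.sum_sq_norm_inner_right, mul_sum]
  refine sum_le_sum fun i _ => ?_
  by_cases hi : i ∈ s
  · exact mul_le_mul_of_nonneg_right (hμ i hi) (by positivity)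
  · simp [b.inner_eq_zero_of_mem_span_image hu hi]

lemma lt_reApplyInnerSelf_of_mem_span_image (hT : ∀ i, T (b i) = (μ i : 𝕜) • b i)
    (hμ : ∀ i ∈ s, c < μ i) (hu : u ∈ Submodule.span 𝕜 (b '' s)) (hu0 : u ≠ 0) :
    c * ‖u‖ ^ 2 < T.reApplyInnerSelf u := by
  rw [reApplyInnerSelf_eq_sum hT, ← b.sum_sq_norm_inner_right, mul_sum]
  obtain ⟨j, -, hj⟩ : ∃ j ∈ univ, (0 : ℝ) < ‖⟪b j, u⟫_𝕜‖ ^ 2 := by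
    refine exists_lt_of_sum_lt ?_
    rw [sum_const_zero, b.sum_sq_norm_inner_right]
    positivity
  have hjs : j ∈ s := by
    by_contra hjs
    simp [b.inner_eq_zero_of_mem_span_image hu hjs] at hj
  refine sum_lt_sum (fun i _ => ?_) ⟨j, mem_univ j, mul_lt_mul_of_pos_right (hμ j hjs) hj⟩
  by_cases hi : i ∈ s
  · exact mul_le_mul_of_nonneg_right (hμ i hi).le (by positivity)
  · simp [b.inner_eq_zero_of_mem_span_image hu hi]

end OrthonormalBasis

section Weyl

variable {𝕜 E ι κ : Type*} [RCLike 𝕜] [NormedAddCommGroup E] [InnerProductSpace 𝕜 E]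
  [Fintype ι] [Fintype κ]

theorem card_le_sub_le_card_le_of_norm_sub_le (b : OrthonormalBasis ι 𝕜 E)
    (c : OrthonormalBasis κ 𝕜 E) {T S : E →L[𝕜] E} {μ : ι → ℝ} {ν : κ → ℝ}
    (hT : ∀ i, T (b i) = (μ i : 𝕜) • b i) (hS : ∀ j, S (c j) = (ν j : 𝕜) • c j)
    {ε : ℝ} (hε : ‖S - T‖ ≤ ε) (x : ℝ) :
    #{i | μ i ≤ x - ε} ≤ #{j | ν j ≤ x} := by
  have : FiniteDimensional 𝕜 E := .of_basis b.toBasis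
  have hdisj : Disjoint (Submodule.span 𝕜 (b '' ↑({i | μ i ≤ x - ε} : Finset ι)))
      (Submodule.span 𝕜 (c '' ↑({j | ¬ ν j ≤ x} : Finset κ))) := by
    rw [Submodule.disjoint_def]
    intro u huT huS
    by_contra hu
    have hTu := b.reApplyInnerSelf_le_of_mem_span_image hT (fun i hi => by simpa using hi) huT
    have hSu := c.lt_reApplyInnerSelf_of_mem_span_image hS
      (fun j hj => not_le.mp (by simpa using hj)) huS hu
    have hdiff : S.reApplyInnerSelf u - T.reApplyInnerSelf u ≤ ε * ‖u‖ ^ 2 := by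
      grw [← hε, ← (S - T).reApplyInnerSelf_le_opNorm_mul u]
      simp [ContinuousLinearMap.reApplyInnerSelf_apply, inner_sub_left]
    linarith
  have hcard := Submodule.finrank_add_finrank_le_of_disjoint hdisj
  rw [b.finrank_span_image, c.finrank_span_image, finrank_eq_card_basis c.toBasis] at hcard
  have hsplit := card_filter_add_card_filter_not (s := univ) (fun j => ν j ≤ x)
  rw [card_univ] at hsplit
  omega

end Weyl

lemma Matrix.IsHermitian.toEuclideanCLM_eigenvectorBasis {𝕜 n : Type*} [RCLike 𝕜] [Fintype n]
    [DecidableEq n] {A : Matrix n n 𝕜} (hA : A.IsHermitian) (i : n) :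
    toEuclideanCLM (𝕜 := 𝕜) A (hA.eigenvectorBasis i) =
      (hA.eigenvalues i : 𝕜) • hA.eigenvectorBasis i := by
  refine (WithLp.equiv 2 (n → 𝕜)).injective ?_
  change A *ᵥ ⇑(hA.eigenvectorBasis i) = _
  rw [hA.mulVec_eigenvectorBasis i, RCLike.real_smul_eq_coe_smul (K := 𝕜)]
  rfl

lemma esd_sub_le_esd {p : ℕ} {A B : Matrix (Fin p) (Fin p) ℂ} (hA : A.IsHermitian)
    (hB : B.IsHermitian) {ε : ℝ}
    (hε : ‖(toEuclideanCLM (𝕜 := ℂ) (B - A) :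
      EuclideanSpace ℂ (Fin p) →L[ℂ] EuclideanSpace ℂ (Fin p))‖ ≤ ε) (x : ℝ) :
    esd hA (x - ε) ≤ esd hB x := by
  have hcard := card_le_sub_le_card_le_of_norm_sub_le _ _
    hA.toEuclideanCLM_eigenvectorBasis hB.toEuclideanCLM_eigenvectorBasis
    (ε := ε) (by rwa [← map_sub]) x
  unfold esd
  gcongr ?_ * (?_ : ℝ)
  exact_mod_cast hcard

lemma levyDist_le_of_forall_lt {F G : ℝ → ℝ} {δ : ℝ} (hδ : 0 ≤ δ)
    (h : ∀ ε, δ < ε → ∀ x, F (x - ε) ≤ G x ∧ G x ≤ F (x + ε)) :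
    levyDist F G ≤ δ := by
  refine le_of_forall_gt_imp_ge_of_dense fun ε hε => csInf_le ⟨0, fun _ h => h.1.le⟩ ?_
  have hε0 : 0 < ε := hδ.trans_lt hε
  refine ⟨hε0, fun x => ⟨?_, ?_⟩⟩ <;> linarith [h ε hε x]

/-- Lévy distance bound for Hermitian matrices: `L(F^A, F^B) ≤ ‖A - B‖` (operator
norm). -/
theorem levyDist_esd_le_opNorm (p : ℕ) (A B : Matrix (Fin p) (Fin p) ℂ)
    (hA : A.IsHermitian) (hB : B.IsHermitian) :
    levyDist (esd hA) (esd hB) ≤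
      ‖(Matrix.toEuclideanCLM (𝕜 := ℂ) (A - B) :
          EuclideanSpace ℂ (Fin p) →L[ℂ] EuclideanSpace ℂ (Fin p))‖ := by
  refine levyDist_le_of_forall_lt (norm_nonneg _) fun ε hε x => ⟨?_, ?_⟩
  · refine esd_sub_le_esd hA hB (le_of_lt ?_) x
    rwa [← norm_neg, ← map_neg, neg_sub]
  · simpa using esd_sub_le_esd hB hA hε.le (x + ε)
end

section
/- Lévy distance estimate via Frobenius norms: for p×n complex matrices A and B, L(F^{AA*}, F^{BB*})^4 ≤ (2/p²) tr((A−B)(A−B)*) · tr(AA* + BB*). -/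
open Matrix

open Finset Polynomial
open scoped ComplexOrder

/-!
Let `α` and `β` be the spectra of the Hermitian dilations `[[0, A], [Aᴴ, 0]]` and
`[[0, B], [Bᴴ, 0]]`. Comparing characteristic polynomials, the multiset `{α_k²} + p • {0}` equals
`2 • {λ_i(AAᴴ)} + n • {0}`, so counting the `α_k²` below `y ≥ 0` recovers `2 p F^{AAᴴ}(y)` up to
the constant `n - p`.
The squared moduli `Q_kl = |⟨u_k, v_l⟩|²` of the overlaps of the two eigenbases form a doubly
stochastic matrix with `∑ (α_k - β_l)² Q_kl = 2 ‖A - B‖²` and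
`∑ (α_k + β_l)² Q_kl ≤ 4 (‖A‖² + ‖B‖²)` (Frobenius norms), so by Cauchy–Schwarz the cost
`E = ∑ |α_k² - β_l²| Q_kl` satisfies `E² ≤ 8 ‖A - B‖² (‖A‖² + ‖B‖²)`.
Averaging `1[α_k² ≤ x - ε] ≤ 1[β_l² ≤ x] + |α_k² - β_l²| / ε` against `Q` shows that the two
distribution functions differ by at most `E / (2 p ε)` after a shift by `ε`, which is `≤ ε` once
`ε² ≥ E / (2 p)`. Hence `L⁴ ≤ (E / (2 p))²`.
-/

lemma sq_sum_abs_sq_sub_sq_mul_le {ι : Type*} [Fintype ι] (a b : ι → ℝ) {w : ι → ι → ℝ}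
    (hw : ∀ k l, 0 ≤ w k l) :
    (∑ k, ∑ l, |a k ^ 2 - b l ^ 2| * w k l) ^ 2 ≤
      (∑ k, ∑ l, (a k - b l) ^ 2 * w k l) * ∑ k, ∑ l, (a k + b l) ^ 2 * w k l := by
  simp only [← Fintype.sum_prod_type']
  refine sum_sq_le_sum_mul_sum_of_sq_le_mul _ (fun _ _ => mul_nonneg (sq_nonneg _) (hw _ _))
    (fun _ _ => mul_nonneg (sq_nonneg _) (hw _ _)) fun _ _ => le_of_eq ?_
  rw [mul_pow, sq_abs]
  ring

namespace Matrix

lemma re_trace_mul_conjTranspose_nonneg {𝕜 m n : Type*} [RCLike 𝕜] [Fintype m] [Fintype n]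
    (M : Matrix m n 𝕜) : 0 ≤ RCLike.re (M * Mᴴ).trace :=
  (RCLike.nonneg_iff.mp (posSemidef_self_mul_conjTranspose M).trace_nonneg).1

section DoublyStochastic

variable {𝕜 ι : Type*} [RCLike 𝕜] [Fintype ι] [DecidableEq ι] {Q : Matrix ι ι ℝ}

lemma of_norm_sq_mem_doublyStochastic {W : Matrix ι ι 𝕜} (hW : W ∈ unitaryGroup ι 𝕜) :
    of (fun i j => ‖W i j‖ ^ 2) ∈ doublyStochastic ℝ ι := by
  refine mem_doublyStochastic_iff_sum.mpr ⟨fun _ _ => sq_nonneg _, fun i => ?_, fun j => ?_⟩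
  · have h := congrFun (congrFun (mem_unitaryGroup_iff.mp hW) i) i
    simp only [mul_apply, star_apply, RCLike.star_def, RCLike.mul_conj, one_apply_eq] at h
    exact_mod_cast h
  · have h := congrFun (congrFun (mem_unitaryGroup_iff'.mp hW) j) j
    simp only [mul_apply, star_apply, RCLike.star_def, RCLike.conj_mul, one_apply_eq] at h
    exact_mod_cast h

lemma sum_sum_mul_left_of_mem_doublyStochastic (hQ : Q ∈ doublyStochastic ℝ ι) (f : ι → ℝ) :
    ∑ i, ∑ j, f i * Q i j = ∑ i, f i := by
  simp [← mul_sum, sum_row_of_mem_doublyStochastic hQ]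

lemma sum_sum_mul_right_of_mem_doublyStochastic (hQ : Q ∈ doublyStochastic ℝ ι) (g : ι → ℝ) :
    ∑ i, ∑ j, g j * Q i j = ∑ j, g j := by
  rw [sum_comm]
  simp [← mul_sum, sum_col_of_mem_doublyStochastic hQ]

lemma card_filter_le_card_filter_add_of_mem_doublyStochastic (hQ : Q ∈ doublyStochastic ℝ ι)
    (a b : ι → ℝ) (y : ℝ) {ε : ℝ} (hε : 0 < ε) :
    (#{k | a k ≤ y - ε} : ℝ) ≤ #{l | b l ≤ y} + (∑ k, ∑ l, |a k - b l| * Q k l) / ε := by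
  have hpoint : ∀ k l, (if a k ≤ y - ε then 1 else 0 : ℝ) ≤
      (if b l ≤ y then 1 else 0) + |a k - b l| / ε := by
    intro k l
    have : 0 ≤ |a k - b l| / ε := by positivity
    split_ifs with _ hb hb <;> try linarith
    rw [zero_add, one_le_div hε]
    linarith [neg_abs_le (a k - b l), not_le.mp hb]
  calc (#{k | a k ≤ y - ε} : ℝ)
      = ∑ k, ∑ l, (if a k ≤ y - ε then 1 else 0 : ℝ) * Q k l := by
        rw [sum_sum_mul_left_of_mem_doublyStochastic hQ, sum_boole]
    _ ≤ ∑ k, ∑ l, ((if b l ≤ y then 1 else 0) + |a k - b l| / ε) * Q k l := by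
        gcongr with k _ l _
        · exact nonneg_of_mem_doublyStochastic hQ
        · exact hpoint k l
    _ = #{l | b l ≤ y} + (∑ k, ∑ l, |a k - b l| * Q k l) / ε := by
        simp only [add_mul, sum_add_distrib, sum_sum_mul_right_of_mem_doublyStochastic hQ,
          sum_boole, sum_div, div_mul_eq_mul_div]

end DoublyStochastic

namespace IsHermitian

variable {𝕜 ι : Type*} [RCLike 𝕜] [Fintype ι] [DecidableEq ι] {H K : Matrix ι ι 𝕜}

noncomputable def eigenCoupling (hH : H.IsHermitian) (hK : K.IsHermitian) : Matrix ι ι ℝ :=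
  of fun k l => ‖(star (hH.eigenvectorUnitary : Matrix ι ι 𝕜) * hK.eigenvectorUnitary) k l‖ ^ 2

variable (hH : H.IsHermitian) (hK : K.IsHermitian)

lemma eigenCoupling_mem_doublyStochastic : hH.eigenCoupling hK ∈ doublyStochastic ℝ ι :=
  of_norm_sq_mem_doublyStochastic
    (mul_mem (Unitary.star_mem hH.eigenvectorUnitary.2) hK.eigenvectorUnitary.2)

lemma re_trace_mul_eq_sum_eigenCoupling :
    RCLike.re (H * K).trace =
      ∑ k, ∑ l, hH.eigenvalues k * hK.eigenvalues l * hH.eigenCoupling hK k l := by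
  set U : Matrix ι ι 𝕜 := (hH.eigenvectorUnitary : Matrix ι ι 𝕜)
  set V : Matrix ι ι 𝕜 := (hK.eigenvectorUnitary : Matrix ι ι 𝕜)
  set Dα := diagonal (RCLike.ofReal ∘ hH.eigenvalues : ι → 𝕜)
  set Dβ := diagonal (RCLike.ofReal ∘ hK.eigenvalues : ι → 𝕜)
  set C := star U * V
  have hH' : H = U * Dα * star U := hH.spectral_theorem
  have hK' : K = V * Dβ * star V := hK.spectral_theorem
  have hC : star V * U = star C := by simp [C, star_mul]
  have htrace : (H * K).trace = (Dα * C * Dβ * star C).trace := by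
    rw [hH', hK', show U * Dα * star U * (V * Dβ * star V) = U * (Dα * C * Dβ * star V) by
      simp only [C, Matrix.mul_assoc], trace_mul_comm, ← hC]
    simp only [Matrix.mul_assoc]
  rw [htrace]
  simp only [trace, diag, mul_apply (M := Dα * C * Dβ), map_sum]
  refine sum_congr rfl fun k _ => sum_congr rfl fun l _ => ?_
  simp only [mul_diagonal, diagonal_mul, star_apply, Dα, Dβ, eigenCoupling, of_apply, C, U, V]
  generalize (star (hH.eigenvectorUnitary : Matrix ι ι 𝕜) * hK.eigenvectorUnitary) k l = c
  rw [← RCLike.ofReal_re (K := 𝕜) (_ * _ * _)]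
  congr 1
  simp only [Function.comp_apply, RCLike.star_def]
  push_cast
  rw [← RCLike.mul_conj]
  ring

lemma sum_sq_eigenvalues : ∑ k, hH.eigenvalues k ^ 2 = RCLike.re (H * H).trace := by
  rw [hH.re_trace_mul_eq_sum_eigenCoupling hH]
  simp [eigenCoupling, one_apply, apply_ite, sq]

lemma sum_sub_sq_mul_eigenCoupling :
    ∑ k, ∑ l, (hH.eigenvalues k - hK.eigenvalues l) ^ 2 * hH.eigenCoupling hK k l =
      RCLike.re ((H - K) * (H - K)).trace := by
  have hQ := hH.eigenCoupling_mem_doublyStochastic hK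
  have hexpand :
      ∑ k, ∑ l, (hH.eigenvalues k - hK.eigenvalues l) ^ 2 * hH.eigenCoupling hK k l =
        ∑ k, ∑ l, hH.eigenvalues k ^ 2 * hH.eigenCoupling hK k l
          + ∑ k, ∑ l, hK.eigenvalues l ^ 2 * hH.eigenCoupling hK k l
          - 2 * ∑ k, ∑ l, hH.eigenvalues k * hK.eigenvalues l * hH.eigenCoupling hK k l := by
    simp only [mul_sum, ← sum_add_distrib, ← sum_sub_distrib]
    exact sum_congr rfl fun k _ => sum_congr rfl fun l _ => by ring
  rw [hexpand, sum_sum_mul_left_of_mem_doublyStochastic hQ,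
    sum_sum_mul_right_of_mem_doublyStochastic hQ, ← hH.re_trace_mul_eq_sum_eigenCoupling hK,
    hH.sum_sq_eigenvalues, hK.sum_sq_eigenvalues, sub_mul, mul_sub, mul_sub]
  simp only [trace_sub, map_sub, trace_mul_comm K H]
  ring

lemma sum_add_sq_mul_eigenCoupling_le :
    ∑ k, ∑ l, (hH.eigenvalues k + hK.eigenvalues l) ^ 2 * hH.eigenCoupling hK k l ≤
      2 * (RCLike.re (H * H).trace + RCLike.re (K * K).trace) := by
  have hQ := hH.eigenCoupling_mem_doublyStochastic hK
  calc ∑ k, ∑ l, (hH.eigenvalues k + hK.eigenvalues l) ^ 2 * hH.eigenCoupling hK k l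
      ≤ ∑ k, ∑ l, (2 * hH.eigenvalues k ^ 2 * hH.eigenCoupling hK k l +
          2 * hK.eigenvalues l ^ 2 * hH.eigenCoupling hK k l) := by
        gcongr with k _ l _
        rw [← add_mul]
        gcongr
        · exact nonneg_of_mem_doublyStochastic hQ
        · linarith [sq_nonneg (hH.eigenvalues k - hK.eigenvalues l)]
    _ = 2 * (RCLike.re (H * H).trace + RCLike.re (K * K).trace) := by
        simp only [sum_add_distrib]
        rw [sum_sum_mul_left_of_mem_doublyStochastic hQ (fun k => 2 * _),
          sum_sum_mul_right_of_mem_doublyStochastic hQ (fun l => 2 * _), ← mul_sum, ← mul_sum,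
          hH.sum_sq_eigenvalues, hK.sum_sq_eigenvalues]
        ring

lemma charpoly_mul_self : (H * H).charpoly = ∏ i, (X - C ((hH.eigenvalues i ^ 2 : ℝ) : 𝕜)) := by
  rw [← hH.charpoly_cfc_eq (· ^ 2), cfc_pow_id H 2 hH.isSelfAdjoint, sq]

lemma roots_charpoly_mul_self :
    (H * H).charpoly.roots = univ.val.map fun i => ((hH.eigenvalues i ^ 2 : ℝ) : 𝕜) := by
  rw [hH.charpoly_mul_self, roots_prod _ _ (prod_ne_zero_iff.mpr fun i _ => X_sub_C_ne_zero _)]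
  simp only [roots_X_sub_C, Multiset.bind_singleton]

end IsHermitian

section HermitianDilation

variable {𝕜 m n : Type*} [RCLike 𝕜]

def hermitianDilation (A : Matrix m n 𝕜) : Matrix (m ⊕ n) (m ⊕ n) 𝕜 :=
  fromBlocks 0 A Aᴴ 0

lemma isHermitian_hermitianDilation (A : Matrix m n 𝕜) : (hermitianDilation A).IsHermitian := by
  simp [hermitianDilation, IsHermitian, fromBlocks_conjTranspose]

lemma hermitianDilation_sub (A B : Matrix m n 𝕜) :
    hermitianDilation (A - B) = hermitianDilation A - hermitianDilation B := by
  simp [hermitianDilation, sub_eq_add_neg, fromBlocks_add, fromBlocks_neg]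

variable [Fintype m] [Fintype n]

lemma hermitianDilation_mul_self (A : Matrix m n 𝕜) :
    hermitianDilation A * hermitianDilation A = fromBlocks (A * Aᴴ) 0 0 (Aᴴ * A) := by
  simp [hermitianDilation, fromBlocks_multiply]

lemma re_trace_hermitianDilation_mul_self (A : Matrix m n 𝕜) :
    RCLike.re (hermitianDilation A * hermitianDilation A).trace =
      2 * RCLike.re (A * Aᴴ).trace := by
  have htrace : (fromBlocks (A * Aᴴ) 0 0 (Aᴴ * A)).trace = (A * Aᴴ).trace + (Aᴴ * A).trace := by
    simp [trace, Fintype.sum_sum_type]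
  rw [hermitianDilation_mul_self, htrace, trace_mul_comm Aᴴ, map_add, two_mul]

variable [DecidableEq m] [DecidableEq n]

lemma charpoly_hermitianDilation_mul_self (A : Matrix m n 𝕜) :
    X ^ Fintype.card m * (hermitianDilation A * hermitianDilation A).charpoly =
      X ^ Fintype.card n * (A * Aᴴ).charpoly ^ 2 := by
  rw [hermitianDilation_mul_self, charpoly_fromBlocks_zero₁₂, mul_left_comm,
    charpoly_mul_comm' Aᴴ A]
  ring

lemma eigenvalues_hermitianDilation_sq_multiset (A : Matrix m n 𝕜) :
    Fintype.card m • {0} +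
        univ.val.map (fun k => (isHermitian_hermitianDilation A).eigenvalues k ^ 2) =
      Fintype.card n • {0} +
        2 • univ.val.map (isHermitian_mul_conjTranspose_self A).eigenvalues := by
  have h := congrArg roots (charpoly_hermitianDilation_mul_self A)
  rw [roots_mul ((monic_X_pow _).mul (charpoly_monic _)).ne_zero,
    roots_mul ((monic_X_pow _).mul ((charpoly_monic _).pow 2)).ne_zero, roots_X_pow, roots_X_pow,
    roots_pow, (isHermitian_hermitianDilation A).roots_charpoly_mul_self,
    (isHermitian_mul_conjTranspose_self A).roots_charpoly_eq_eigenvalues] at h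
  simpa [Multiset.map_nsmul, Multiset.map_map] using congrArg (Multiset.map RCLike.re) h

lemma card_filter_sq_eigenvalues_hermitianDilation (A : Matrix m n 𝕜) {y : ℝ} (hy : 0 ≤ y) :
    #{k | (isHermitian_hermitianDilation A).eigenvalues k ^ 2 ≤ y} + Fintype.card m =
      2 * #{i | (isHermitian_mul_conjTranspose_self A).eigenvalues i ≤ y} + Fintype.card n := by
  have h := congrArg (Multiset.countP (· ≤ y)) (eigenvalues_hermitianDilation_sq_multiset A)
  have h0 : Multiset.countP (· ≤ y) ({0} : Multiset ℝ) = 1 := by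
    simp [Multiset.countP_eq_card_filter, Multiset.filter_singleton, hy]
  simp only [Multiset.countP_add, Multiset.countP_nsmul, h0, Multiset.countP_map,
    ← Finset.filter_val, ← Finset.card_def] at h
  omega

noncomputable def dilationTransportCost (A B : Matrix m n 𝕜) : ℝ :=
  ∑ k, ∑ l, |(isHermitian_hermitianDilation A).eigenvalues k ^ 2 -
    (isHermitian_hermitianDilation B).eigenvalues l ^ 2| *
    (isHermitian_hermitianDilation A).eigenCoupling (isHermitian_hermitianDilation B) k l

lemma sq_dilationTransportCost_le (A B : Matrix m n 𝕜) :
    dilationTransportCost A B ^ 2 ≤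
      8 * RCLike.re ((A - B) * (A - B)ᴴ).trace * RCLike.re (A * Aᴴ + B * Bᴴ).trace := by
  set hA := isHermitian_hermitianDilation A
  set hB := isHermitian_hermitianDilation B
  have hQ := hA.eigenCoupling_mem_doublyStochastic hB
  have hsub := hA.sum_sub_sq_mul_eigenCoupling hB
  have hadd := hA.sum_add_sq_mul_eigenCoupling_le hB
  rw [← hermitianDilation_sub, re_trace_hermitianDilation_mul_self] at hsub
  rw [re_trace_hermitianDilation_mul_self, re_trace_hermitianDilation_mul_self] at hadd
  have hD := re_trace_mul_conjTranspose_nonneg (A - B)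
  calc _ ≤ (∑ k, ∑ l, (hA.eigenvalues k - hB.eigenvalues l) ^ 2 * hA.eigenCoupling hB k l) *
        ∑ k, ∑ l, (hA.eigenvalues k + hB.eigenvalues l) ^ 2 * hA.eigenCoupling hB k l :=
        sq_sum_abs_sq_sub_sq_mul_le _ _ fun _ _ => nonneg_of_mem_doublyStochastic hQ
    _ ≤ (2 * RCLike.re ((A - B) * (A - B)ᴴ).trace) *
        (4 * RCLike.re (A * Aᴴ + B * Bᴴ).trace) := by
        rw [hsub, trace_add, map_add]
        gcongr
        linarith
    _ = _ := by ring

lemma two_mul_card_filter_eigenvalues_le (A B : Matrix m n 𝕜) {x ε : ℝ} (hε : 0 < ε)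
    (hx : 0 ≤ x - ε) :
    2 * (#{i | (isHermitian_mul_conjTranspose_self A).eigenvalues i ≤ x - ε} : ℝ) ≤
      2 * #{i | (isHermitian_mul_conjTranspose_self B).eigenvalues i ≤ x} +
        dilationTransportCost A B / ε := by
  have hcount := card_filter_le_card_filter_add_of_mem_doublyStochastic
    ((isHermitian_hermitianDilation A).eigenCoupling_mem_doublyStochastic
      (isHermitian_hermitianDilation B))
    ((isHermitian_hermitianDilation A).eigenvalues · ^ 2)
    ((isHermitian_hermitianDilation B).eigenvalues · ^ 2) x hε
  have hA := congrArg (Nat.cast : ℕ → ℝ) (card_filter_sq_eigenvalues_hermitianDilation A hx)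
  have hB := congrArg (Nat.cast : ℕ → ℝ)
    (card_filter_sq_eigenvalues_hermitianDilation B (hx.trans (sub_le_self x hε.le)))
  push_cast at hA hB
  rw [dilationTransportCost]
  linarith

end HermitianDilation

end Matrix

lemma esd_nonneg {p : ℕ} {M : Matrix (Fin p) (Fin p) ℂ} (hM : M.IsHermitian) (x : ℝ) :
    0 ≤ esd hM x := by
  unfold esd
  positivity

lemma esd_sub_le_esd_add {p n : ℕ} (A B : Matrix (Fin p) (Fin n) ℂ) (x : ℝ) {ε : ℝ}
    (hε : 0 < ε) :
    esd (isHermitian_mul_conjTranspose_self A) (x - ε) ≤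
      esd (isHermitian_mul_conjTranspose_self B) x +
        √(2 / (p : ℝ) ^ 2 * (trace ((A - B) * (A - B)ᴴ)).re * (trace (A * Aᴴ + B * Bᴴ)).re) /
          ε := by
  set E := dilationTransportCost A B
  have hE : E / (2 * p) ≤
      √(2 / (p : ℝ) ^ 2 * (trace ((A - B) * (A - B)ᴴ)).re * (trace (A * Aᴴ + B * Bᴴ)).re) := by
    refine Real.le_sqrt_of_sq_le ?_
    calc (E / (2 * p)) ^ 2 = E ^ 2 / (2 * p) ^ 2 := div_pow _ _ _
      _ ≤ 8 * (trace ((A - B) * (A - B)ᴴ)).re * (trace (A * Aᴴ + B * Bᴴ)).re / (2 * p) ^ 2 := by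
          gcongr
          exact sq_dilationTransportCost_le A B
      _ = _ := by ring
  by_cases hx : x - ε < 0
  · have hA0 : esd (isHermitian_mul_conjTranspose_self A) (x - ε) = 0 := by
      simp only [esd, mul_eq_zero, Nat.cast_eq_zero, card_eq_zero, filter_eq_empty_iff, not_le]
      exact Or.inr fun i _ =>
        hx.trans_le ((posSemidef_self_mul_conjTranspose A).eigenvalues_nonneg i)
    rw [hA0]
    have := esd_nonneg (isHermitian_mul_conjTranspose_self B) x
    positivity
  have hN := two_mul_card_filter_eigenvalues_le A B hε (not_lt.mp hx)
  simp only [esd]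
  calc (p : ℝ)⁻¹ * #{i | (isHermitian_mul_conjTranspose_self A).eigenvalues i ≤ x - ε}
      ≤ (p : ℝ)⁻¹ * (#{i | (isHermitian_mul_conjTranspose_self B).eigenvalues i ≤ x} +
          E / (2 * ε)) := by
        gcongr
        rw [div_mul_eq_div_div_swap]
        linarith
    _ = (p : ℝ)⁻¹ * #{i | (isHermitian_mul_conjTranspose_self B).eigenvalues i ≤ x} +
          E / (2 * p) / ε := by ring
    _ ≤ _ := by gcongr

lemma levyDist_nonneg (F G : ℝ → ℝ) : 0 ≤ levyDist F G :=
  Real.sInf_nonneg fun _ hε => hε.1.le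

lemma levyDist_le_sqrt {F G : ℝ → ℝ} {δ : ℝ} (hδ : 0 ≤ δ)
    (hFG : ∀ x ε, 0 < ε → F (x - ε) ≤ G x + δ / ε)
    (hGF : ∀ x ε, 0 < ε → G (x - ε) ≤ F x + δ / ε) : levyDist F G ≤ √δ := by
  refine le_of_forall_gt_imp_ge_of_dense fun ε hε => csInf_le ⟨0, fun _ h => h.1.le⟩ ?_
  have hε0 : 0 < ε := (Real.sqrt_nonneg δ).trans_lt hε
  have hδε : δ / ε ≤ ε := by
    rw [div_le_iff₀ hε0]
    nlinarith [Real.sq_sqrt hδ, Real.sqrt_nonneg δ]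
  refine ⟨hε0, fun x => ⟨by linarith [hFG x ε hε0], ?_⟩⟩
  have := hGF (x + ε) ε hε0
  rw [add_sub_cancel_right] at this
  linarith

/-- Lévy distance estimate via Frobenius norms: for `p × n` complex matrices `A, B`,
`L(F^{AA*}, F^{BB*})⁴ ≤ (2/p²) tr((A-B)(A-B)*) · tr(AA* + BB*)`. -/
theorem levyDist_esd_pow_four_le (p n : ℕ) (A B : Matrix (Fin p) (Fin n) ℂ) :
    levyDist (esd (Matrix.isHermitian_mul_conjTranspose_self A))
        (esd (Matrix.isHermitian_mul_conjTranspose_self B)) ^ 4 ≤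
      2 / (p : ℝ) ^ 2 * (Matrix.trace ((A - B) * (A - B)ᴴ)).re *
        (Matrix.trace (A * Aᴴ + B * Bᴴ)).re := by
  set R := 2 / (p : ℝ) ^ 2 * (trace ((A - B) * (A - B)ᴴ)).re * (trace (A * Aᴴ + B * Bᴴ)).re
  have hR : 0 ≤ R := by
    have hD : 0 ≤ (trace ((A - B) * (A - B)ᴴ)).re := re_trace_mul_conjTranspose_nonneg (A - B)
    have hS : 0 ≤ (trace (A * Aᴴ + B * Bᴴ)).re := by
      rw [trace_add, Complex.add_re]
      exact add_nonneg (re_trace_mul_conjTranspose_nonneg A) (re_trace_mul_conjTranspose_nonneg B)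
    positivity
  have hL : levyDist (esd (isHermitian_mul_conjTranspose_self A))
      (esd (isHermitian_mul_conjTranspose_self B)) ≤ √√R := by
    refine levyDist_le_sqrt (Real.sqrt_nonneg R) (fun x ε hε => esd_sub_le_esd_add A B x hε)
      fun x ε hε => ?_
    have h := esd_sub_le_esd_add B A x hε
    rwa [← neg_sub A B, conjTranspose_neg, Matrix.neg_mul, Matrix.mul_neg, neg_neg,
      add_comm (B * Bᴴ)] at h
  calc _ ≤ (√√R) ^ 4 := by gcongr; exact levyDist_nonneg _ _
    _ = R := by
      rw [show 4 = 2 * 2 from rfl, pow_mul, Real.sq_sqrt (Real.sqrt_nonneg R), Real.sq_sqrt hR]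
end
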